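/- arXiv:2105.14626 — 5 statements merged into one kernel-verified Lean document; each statement's English description precedes it below -/
import Mathlib

section
/- Abstract Riemann–Roch theorem: Let k be a field, V a vector space over k, and K a k-subspace of V. Let D₁ and D₂ be commensurable k-subspaces of V such that H⁰(D₁), H¹(D₁), H⁰(D₂), H¹(D₂) are all finite-dimensional over k. Then χ(D₁) − χ(D₂) = [D₂ | D₁]. -/
open Module

variable {k V : Type*} [Field k] [AddCommGroup V] [Module k V]

/-- Two `k`-subspaces `A`, `B` of `V` are commensurable if `(A + B)/(A ∩ B)` is
finite-dimensional over `k`. -/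
def AreCommensurable (A B : Submodule k V) : Prop :=
  FiniteDimensional k (↥(A ⊔ B) ⧸ ((A ⊓ B).comap (A ⊔ B).subtype))

/-- The relative dimension `[A | B] = dim B/(A ∩ B) − dim A/(A ∩ B)`. -/
noncomputable def relDim (A B : Submodule k V) : ℤ :=
  (finrank k (↥B ⧸ ((A ⊓ B).comap B.subtype)) : ℤ) -
    (finrank k (↥A ⧸ ((A ⊓ B).comap A.subtype)) : ℤ)

/-- The Euler characteristic `χ(D) = dim (D ∩ K) − dim V/(D + K)` relative to a fixed
subspace `K`. -/
noncomputable def chiRR (K D : Submodule k V) : ℤ :=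
  (finrank k ↥(D ⊓ K) : ℤ) - (finrank k (V ⧸ (D ⊔ K)) : ℤ)

private lemma fd_of_sub_quot {M : Type*} [AddCommGroup M] [Module k M] (p : Submodule k M)
    (hp : FiniteDimensional k p) (hq : FiniteDimensional k (M ⧸ p)) :
    FiniteDimensional k M := by
  have h1 : Module.rank k M < Cardinal.aleph0 := by
    rw [← Submodule.rank_quotient_add_rank p]
    exact Cardinal.add_lt_aleph0 (Module.rank_lt_aleph0 k _) (Module.rank_lt_aleph0 k _)
  exact Module.rank_lt_aleph0_iff.mp h1

private lemma fd_quot_of_le {M : Type*} [AddCommGroup M] [Module k M] {p q : Submodule k M}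
    (hpq : p ≤ q) (hp : FiniteDimensional k (M ⧸ p)) : FiniteDimensional k (M ⧸ q) := by
  haveI := hp
  refine Module.Finite.of_surjective (Submodule.mapQ p q LinearMap.id hpq) ?_
  intro y
  obtain ⟨x, rfl⟩ := Submodule.Quotient.mk_surjective q y
  exact ⟨Submodule.Quotient.mk x, by rw [Submodule.mapQ_apply]; rfl⟩

private lemma chi_step (K D D' : Submodule k V) (h : D ≤ D')
    (hq : FiniteDimensional k (↥D' ⧸ (D.comap D'.subtype)))
    (h0' : FiniteDimensional k ↥(D' ⊓ K))
    (h1' : FiniteDimensional k (V ⧸ (D' ⊔ K))) :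
    chiRR K D' - chiRR K D = (finrank k (↥D' ⧸ (D.comap D'.subtype)) : ℤ) := by
  haveI := hq; haveI := h0'; haveI := h1'
  set Dc := D.comap D'.subtype with hDc
  set B := D ⊔ K with hB
  set B' := D' ⊔ K with hB'
  have hBB' : B ≤ B' := sup_le_sup_right h K
  have hker_f : LinearMap.ker (B.mkQ ∘ₗ D'.subtype) = B.comap D'.subtype := by
    rw [LinearMap.ker_comp, Submodule.ker_mkQ]
  have hDle : Dc ≤ LinearMap.ker (B.mkQ ∘ₗ D'.subtype) := by
    rw [hker_f]
    exact Submodule.comap_mono le_sup_left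
  set g : (↥D' ⧸ Dc) →ₗ[k] V ⧸ B := Dc.liftQ (B.mkQ ∘ₗ D'.subtype) hDle with hg
  have hrange : LinearMap.range g = B'.map B.mkQ := by
    rw [hg, Submodule.range_liftQ, LinearMap.range_comp, Submodule.range_subtype]
    refine le_antisymm (Submodule.map_mono le_sup_left) ?_
    rw [hB', Submodule.map_sup]
    refine sup_le le_rfl ?_
    rintro y ⟨x, hx, rfl⟩
    have hx0 : B.mkQ x = 0 := by
      rw [← LinearMap.mem_ker, Submodule.ker_mkQ]
      exact Submodule.mem_sup_right hx
    rw [hx0]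
    exact (Submodule.map B.mkQ D').zero_mem
  have hker_g : LinearMap.ker g = (B.comap D'.subtype).map Dc.mkQ := by
    rw [hg, Submodule.ker_liftQ, hker_f]
  set g₂ : ↥(D' ⊓ K) →ₗ[k] ↥D' ⧸ Dc :=
    Dc.mkQ ∘ₗ Submodule.inclusion (inf_le_left : D' ⊓ K ≤ D') with hg₂
  have hrange₂ : LinearMap.range g₂ = LinearMap.ker g := by
    rw [hg₂, LinearMap.range_comp, Submodule.range_inclusion, hker_g]
    refine le_antisymm
      (Submodule.map_mono (Submodule.comap_mono (le_trans inf_le_right le_sup_right))) ?_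
    rintro y ⟨x, hx, rfl⟩
    have hxB : (x : V) ∈ B := hx
    obtain ⟨d, hd, c, hc, hdc⟩ := Submodule.mem_sup.mp hxB
    have hcD' : c ∈ D' := by
      have hce : c = (x : V) - d := by rw [← hdc]; abel
      rw [hce]
      exact sub_mem x.2 (h hd)
    refine ⟨⟨c, hcD'⟩, Submodule.mem_comap.mpr (Submodule.mem_inf.mpr ⟨hcD', hc⟩), ?_⟩
    have hmem : (⟨c, hcD'⟩ - x : ↥D') ∈ Dc := by
      rw [hDc, Submodule.mem_comap]
      show ((⟨c, hcD'⟩ - x : ↥D') : V) ∈ D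
      have hval : ((⟨c, hcD'⟩ - x : ↥D') : V) = c - (x : V) := rfl
      have hcx : c - (x : V) = -d := by rw [← hdc]; abel
      rw [hval, hcx]
      exact neg_mem hd
    rw [Submodule.mkQ_apply, Submodule.mkQ_apply]
    exact (Submodule.Quotient.eq Dc).mpr hmem
  have hker₂ : LinearMap.ker g₂ = (D ⊓ K).comap (D' ⊓ K).subtype := by
    rw [hg₂, LinearMap.ker_comp, Submodule.ker_mkQ]
    ext x
    simp only [Submodule.mem_comap, Submodule.coe_inclusion, Submodule.coe_subtype, hDc,
      Submodule.mem_inf]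
    exact ⟨fun hx => ⟨hx, x.2.2⟩, fun hx => hx.1⟩
  -- rank-nullity for g and g₂
  have hRN : finrank k ↥(LinearMap.range g) + finrank k ↥(LinearMap.ker g)
      = finrank k (↥D' ⧸ Dc) := LinearMap.finrank_range_add_finrank_ker g
  have hRN₂ : finrank k ↥(LinearMap.range g₂) + finrank k ↥(LinearMap.ker g₂)
      = finrank k ↥(D' ⊓ K) := LinearMap.finrank_range_add_finrank_ker g₂
  rw [hrange₂, hker₂] at hRN₂
  have e := Submodule.comapSubtypeEquivOfLe (inf_le_inf_right K h)
  rw [e.finrank_eq] at hRN₂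
  rw [hrange] at hRN
  haveI hP : FiniteDimensional k ↥(B'.map B.mkQ) := by
    rw [← hrange]
    infer_instance
  haveI hQfd : FiniteDimensional k ((V ⧸ B) ⧸ (B'.map B.mkQ)) :=
    Module.Finite.equiv (Submodule.quotientQuotientEquivQuotient B B' hBB').symm
  haveI h1 : FiniteDimensional k (V ⧸ B) := fd_of_sub_quot (B'.map B.mkQ) hP hQfd
  have hQ : finrank k ((V ⧸ B) ⧸ (B'.map B.mkQ)) + finrank k ↥(B'.map B.mkQ)
      = finrank k (V ⧸ B) := Submodule.finrank_quotient_add_finrank _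
  have hQ' : finrank k ((V ⧸ B) ⧸ (B'.map B.mkQ)) = finrank k (V ⧸ B') :=
    (Submodule.quotientQuotientEquivQuotient B B' hBB').finrank_eq
  rw [hQ'] at hQ
  simp only [chiRR]
  rw [← hB, ← hB']
  omega

/-- The abstract Riemann-Roch theorem: `χ(D₁) − χ(D₂) = [D₂ | D₁]`. -/
theorem abstract_riemann_roch (K D₁ D₂ : Submodule k V)
    (hcomm : AreCommensurable D₁ D₂)
    (h01 : FiniteDimensional k ↥(D₁ ⊓ K))
    (h11 : FiniteDimensional k (V ⧸ (D₁ ⊔ K)))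
    (h02 : FiniteDimensional k ↥(D₂ ⊓ K))
    (h12 : FiniteDimensional k (V ⧸ (D₂ ⊔ K))) :
    chiRR K D₁ - chiRR K D₂ = relDim D₂ D₁ := by
  have hc : FiniteDimensional k (↥(D₁ ⊔ D₂) ⧸ ((D₁ ⊓ D₂).comap (D₁ ⊔ D₂).subtype)) := hcomm
  have hq1 : FiniteDimensional k (↥D₁ ⧸ ((D₁ ⊓ D₂).comap D₁.subtype)) := by
    haveI : FiniteDimensional k (↥(D₁ ⊔ D₂) ⧸ (D₂.comap (D₁ ⊔ D₂).subtype)) :=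
      fd_quot_of_le (Submodule.comap_mono inf_le_right) hc
    exact Module.Finite.equiv (LinearMap.quotientInfEquivSupQuotient D₁ D₂).symm
  have hq2 : FiniteDimensional k (↥D₂ ⧸ ((D₁ ⊓ D₂).comap D₂.subtype)) := by
    haveI : FiniteDimensional k (↥(D₂ ⊔ D₁) ⧸ (D₁.comap (D₂ ⊔ D₁).subtype)) := by
      rw [sup_comm D₂ D₁]
      exact fd_quot_of_le (Submodule.comap_mono inf_le_left) hc
    rw [inf_comm D₁ D₂]
    exact Module.Finite.equiv (LinearMap.quotientInfEquivSupQuotient D₂ D₁).symm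
  have step1 := chi_step K (D₁ ⊓ D₂) D₁ inf_le_left hq1 h01 h11
  have step2 := chi_step K (D₁ ⊓ D₂) D₂ inf_le_right hq2 h02 h12
  simp only [relDim]
  rw [inf_comm D₂ D₁]
  omega
end

section
/- Nested case of the abstract Riemann–Roch theorem: Let k be a field, V a vector space over k, and K a k-subspace of V. Let D₂ ⊆ D₁ be k-subspaces of V such that D₁/D₂ is finite-dimensional over k and such that H⁰(D₁), H¹(D₁), H⁰(D₂), H¹(D₂) are all finite-dimensional over k. Then χ(D₁) − χ(D₂) = dim_k D₁/D₂. -/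
open Module

variable {k V : Type*} [Field k] [AddCommGroup V] [Module k V]

/-- The nested case of the abstract Riemann-Roch theorem:
if `D₂ ⊆ D₁` with `D₁/D₂` finite-dimensional, then `χ(D₁) − χ(D₂) = dim D₁/D₂`. -/
theorem abstract_riemann_roch_nested (K D₁ D₂ : Submodule k V) (hle : D₂ ≤ D₁)
    (hfin : FiniteDimensional k (↥D₁ ⧸ (D₂.comap D₁.subtype)))
    (h01 : FiniteDimensional k ↥(D₁ ⊓ K))
    (h11 : FiniteDimensional k (V ⧸ (D₁ ⊔ K)))
    (h02 : FiniteDimensional k ↥(D₂ ⊓ K))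
    (h12 : FiniteDimensional k (V ⧸ (D₂ ⊔ K))) :
    chiRR K D₁ - chiRR K D₂ = (finrank k (↥D₁ ⧸ (D₂.comap D₁.subtype)) : ℤ) := by
  classical
  set D₂' : Submodule k ↥D₁ := D₂.comap D₁.subtype with hD₂'
  -- the map g : D₁/D₂ → V/(D₂ ⊔ K) induced by inclusion
  have hker : D₂' ≤ LinearMap.ker ((D₂ ⊔ K).mkQ ∘ₗ D₁.subtype) := by
    intro x hx
    simp only [LinearMap.mem_ker, LinearMap.comp_apply, Submodule.subtype_apply,
      Submodule.mkQ_apply, Submodule.Quotient.mk_eq_zero]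
    exact Submodule.mem_sup_left hx
  set g : (↥D₁ ⧸ D₂') →ₗ[k] V ⧸ (D₂ ⊔ K) :=
    D₂'.liftQ ((D₂ ⊔ K).mkQ ∘ₗ D₁.subtype) hker with hg
  -- the map h : D₁ ⊓ K → D₁/D₂
  set h : ↥(D₁ ⊓ K) →ₗ[k] (↥D₁ ⧸ D₂') :=
    D₂'.mkQ ∘ₗ Submodule.inclusion (inf_le_left : D₁ ⊓ K ≤ D₁) with hh
  -- range h = ker g
  have hrange_h : LinearMap.range h = LinearMap.ker g := by
    apply le_antisymm
    · rintro _ ⟨y, rfl⟩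
      have : g (h y) = 0 := by
        simp only [hh, hg, LinearMap.comp_apply, Submodule.mkQ_apply, Submodule.liftQ_apply,
          Submodule.subtype_apply, Submodule.Quotient.mk_eq_zero]
        exact Submodule.mem_sup_right y.2.2
      exact this
    · intro x hx
      obtain ⟨z, rfl⟩ := D₂'.mkQ_surjective x
      have hz : (z : V) ∈ D₂ ⊔ K := by
        have : g (D₂'.mkQ z) = 0 := hx
        simpa only [hg, Submodule.mkQ_apply, Submodule.liftQ_apply, LinearMap.comp_apply,
          Submodule.subtype_apply, Submodule.Quotient.mk_eq_zero] using this
      have hz' : (z : V) ∈ D₂ ⊔ K ⊓ D₁ := by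
        rw [← sup_inf_assoc_of_le K hle]
        exact ⟨hz, z.2⟩
      obtain ⟨a, ha, b, hb, hab⟩ := Submodule.mem_sup.mp hz'
      refine ⟨⟨b, ⟨hb.2, hb.1⟩⟩, ?_⟩
      simp only [hh, LinearMap.comp_apply, Submodule.mkQ_apply]
      rw [Submodule.Quotient.eq]
      have : ((Submodule.inclusion (inf_le_left : D₁ ⊓ K ≤ D₁) ⟨b, ⟨hb.2, hb.1⟩⟩ : ↥D₁) - z : V)
          ∈ D₂ := by
        simp only [Submodule.coe_inclusion]
        have : (b : V) - z = -a := by rw [← hab]; abel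
        rw [this]
        exact neg_mem ha
      exact this
  -- ker h ≃ D₂ ⊓ K
  have hker_h : LinearMap.ker h = (D₂ ⊓ K).comap (D₁ ⊓ K).subtype := by
    ext y
    simp only [hh, LinearMap.mem_ker, LinearMap.comp_apply, Submodule.mkQ_apply,
      Submodule.Quotient.mk_eq_zero, Submodule.mem_comap, hD₂', Submodule.subtype_apply,
      Submodule.coe_inclusion, Submodule.mem_inf]
    exact ⟨fun hy => ⟨hy, y.2.2⟩, fun hy => hy.1⟩
  have hkerh_rank : finrank k (LinearMap.ker h) = finrank k ↥(D₂ ⊓ K) := by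
    rw [hker_h]
    exact LinearEquiv.finrank_eq
      (Submodule.comapSubtypeEquivOfLe (inf_le_inf_right K hle))
  -- rank-nullity for h
  have E3 : finrank k (LinearMap.range h) + finrank k ↥(D₂ ⊓ K) = finrank k ↥(D₁ ⊓ K) := by
    rw [← hkerh_rank]
    exact LinearMap.finrank_range_add_finrank_ker h
  -- range g
  have hrange_g : LinearMap.range g = (D₁ ⊔ K).map (D₂ ⊔ K).mkQ := by
    rw [hg, Submodule.range_liftQ, Submodule.map_sup]
    have hKbot : K.map (D₂ ⊔ K).mkQ = ⊥ := by
      rw [eq_bot_iff, Submodule.map_le_iff_le_comap]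
      intro x hx
      simpa [Submodule.Quotient.mk_eq_zero] using Submodule.mem_sup_right hx
    rw [hKbot, sup_bot_eq]
    ext x
    simp only [LinearMap.mem_range, LinearMap.comp_apply, Submodule.subtype_apply,
      Submodule.mem_map, Submodule.mkQ_apply]
    constructor
    · rintro ⟨y, rfl⟩; exact ⟨y, y.2, rfl⟩
    · rintro ⟨y, hy, rfl⟩; exact ⟨⟨y, hy⟩, rfl⟩
  -- rank-nullity for g
  have E2 : finrank k (LinearMap.range g) + finrank k (LinearMap.ker g)
      = finrank k (↥D₁ ⧸ D₂') := LinearMap.finrank_range_add_finrank_ker g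
  -- dimension count in V/(D₂ ⊔ K)
  set M : Submodule k (V ⧸ (D₂ ⊔ K)) := (D₁ ⊔ K).map (D₂ ⊔ K).mkQ with hM
  have hquot : finrank k ((V ⧸ (D₂ ⊔ K)) ⧸ M) = finrank k (V ⧸ (D₁ ⊔ K)) :=
    LinearEquiv.finrank_eq
      (Submodule.quotientQuotientEquivQuotient (D₂ ⊔ K) (D₁ ⊔ K) (sup_le_sup_right hle K))
  have E1 : finrank k (V ⧸ (D₁ ⊔ K)) + finrank k M = finrank k (V ⧸ (D₂ ⊔ K)) := by
    rw [← hquot]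
    exact Submodule.finrank_quotient_add_finrank M
  -- put everything together
  have hrh : finrank k (LinearMap.range h) = finrank k (LinearMap.ker g) := by
    rw [hrange_h]
  rw [hrange_g] at E2
  rw [hrh] at E3
  rw [chiRR, chiRR]
  omega
end

section
/- Dimension count across a fixed subspace: Let k be a field, V a vector space over k, K a k-subspace of V, and D₂ ⊆ D₁ k-subspaces of V such that D₁/D₂ is finite-dimensional over k. Then dim_k D₁/D₂ = dim_k (D₁ ∩ K)/(D₂ ∩ K) + dim_k (D₁ + K)/(D₂ + K); in particular both summands on the right are finite. -/
set_option maxHeartbeats 800000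
set_option synthInstance.maxHeartbeats 200000

open Module

/-- Dimension count across a fixed subspace `K`: for `D₂ ⊆ D₁` with `D₁/D₂`
finite-dimensional, `dim D₁/D₂ = dim (D₁ ∩ K)/(D₂ ∩ K) + dim (D₁ + K)/(D₂ + K)`,
and in particular both summands on the right are finite. -/
theorem dim_count_across_subspace {k V : Type*} [Field k] [AddCommGroup V] [Module k V]
    (K D₁ D₂ : Submodule k V) (hle : D₂ ≤ D₁)
    (hfin : FiniteDimensional k (↥D₁ ⧸ (D₂.comap D₁.subtype))) :
    FiniteDimensional k (↥(D₁ ⊓ K) ⧸ ((D₂ ⊓ K).comap (D₁ ⊓ K).subtype)) ∧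
    FiniteDimensional k (↥(D₁ ⊔ K) ⧸ ((D₂ ⊔ K).comap (D₁ ⊔ K).subtype)) ∧
    finrank k (↥D₁ ⧸ (D₂.comap D₁.subtype)) =
      finrank k (↥(D₁ ⊓ K) ⧸ ((D₂ ⊓ K).comap (D₁ ⊓ K).subtype)) +
        finrank k (↥(D₁ ⊔ K) ⧸ ((D₂ ⊔ K).comap (D₁ ⊔ K).subtype)) := by
  classical
  set S : Submodule k ↥D₁ := D₂.comap D₁.subtype with hS
  set A : Submodule k V := D₂ ⊔ (D₁ ⊓ K) with hAdef
  set T : Submodule k ↥D₁ := A.comap D₁.subtype with hTdef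
  have hST : S ≤ T := Submodule.comap_mono le_sup_left
  -- the key linear map
  set f : ↥(D₁ ⊓ K) →ₗ[k] (↥D₁ ⧸ S) :=
    S.mkQ ∘ₗ Submodule.inclusion (inf_le_left : D₁ ⊓ K ≤ D₁) with hf
  have hker : LinearMap.ker f = (D₂ ⊓ K).comap (D₁ ⊓ K).subtype := by
    ext ⟨x, hx⟩
    simp only [hf, LinearMap.mem_ker, LinearMap.comp_apply, Submodule.mkQ_apply,
      Submodule.Quotient.mk_eq_zero, Submodule.mem_comap, Submodule.inclusion_apply,
      Submodule.coe_subtype, hS, Submodule.mem_inf]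
    exact ⟨fun h => ⟨h, hx.2⟩, fun h => h.1⟩
  have hrange : LinearMap.range f = ((D₁ ⊓ K).comap D₁.subtype).map S.mkQ := by
    rw [hf, LinearMap.range_comp, Submodule.range_inclusion]
  have hcs : T = S ⊔ (D₁ ⊓ K).comap D₁.subtype := by
    apply Submodule.map_injective_of_injective D₁.injective_subtype
    rw [Submodule.map_sup, Submodule.map_comap_subtype, Submodule.map_comap_subtype,
      Submodule.map_comap_subtype]
    rw [inf_eq_right.mpr (sup_le hle inf_le_left : A ≤ D₁),
      inf_eq_right.mpr hle, inf_eq_right.mpr (inf_le_left : D₁ ⊓ K ≤ D₁)]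
  have hSbot : S.map S.mkQ = ⊥ := by
    rw [eq_bot_iff]
    rintro x ⟨y, hy, rfl⟩
    simpa [Submodule.Quotient.mk_eq_zero] using hy
  have hT : T.map S.mkQ = LinearMap.range f := by
    rw [hcs, Submodule.map_sup, hSbot, bot_sup_eq, hrange]
  -- modular law and sup computation
  have hA : D₁ ⊓ (D₂ ⊔ K) = A := by
    rw [inf_comm, sup_inf_assoc_of_le K hle, inf_comm]
  have hsup : D₁ ⊔ (D₂ ⊔ K) = D₁ ⊔ K := by
    rw [← sup_assoc, sup_eq_left.mpr hle]
  -- equivalences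
  have e1 : (↥(D₁ ⊓ K) ⧸ ((D₂ ⊓ K).comap (D₁ ⊓ K).subtype)) ≃ₗ[k] LinearMap.range f :=
    (Submodule.quotEquivOfEq _ _ hker.symm).trans f.quotKerEquivRange
  have e2a := LinearMap.quotientInfEquivSupQuotient D₁ (D₂ ⊔ K)
  rw [← Submodule.comap_inf, hA, hsup] at e2a
  have e2b := Submodule.quotientQuotientEquivQuotient S T hST
  rw [hT] at e2b
  have e2 : (↥(D₁ ⊔ K) ⧸ ((D₂ ⊔ K).comap (D₁ ⊔ K).subtype)) ≃ₗ[k]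
      ((↥D₁ ⧸ S) ⧸ (LinearMap.range f)) := e2a.symm.trans e2b.symm
  haveI hrf : FiniteDimensional k ↥(LinearMap.range f) :=
    FiniteDimensional.finiteDimensional_submodule _
  haveI h1 : FiniteDimensional k (↥(D₁ ⊓ K) ⧸ ((D₂ ⊓ K).comap (D₁ ⊓ K).subtype)) :=
    LinearEquiv.finiteDimensional e1.symm
  haveI h2 : FiniteDimensional k (↥(D₁ ⊔ K) ⧸ ((D₂ ⊔ K).comap (D₁ ⊔ K).subtype)) :=
    LinearEquiv.finiteDimensional e2.symm
  refine ⟨h1, h2, ?_⟩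
  rw [e1.finrank_eq, e2.finrank_eq]
  have := Submodule.finrank_quotient_add_finrank (LinearMap.range f)
  omega
end

section
/- The degree homomorphism: Let k be a field, V a vector space over k, and D a fixed k-subspace of V. The set Γ of k-linear automorphisms g of V such that g(D) is commensurable with D is a subgroup of the group of k-linear automorphisms of V, and the map deg : Γ → ℤ given by deg(g) = [g(D) | D] is a group homomorphism, i.e. deg(g₁g₂) = deg(g₁) + deg(g₂) for all g₁, g₂ ∈ Γ. -/
open Module

variable {k V : Type*} [Field k] [AddCommGroup V] [Module k V]

/-- The degree `deg(g) = [g(D) | D]` of an automorphism `g` with `g(D) ∼ D`. -/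
noncomputable def degRR (D : Submodule k V) (g : V ≃ₗ[k] V) : ℤ :=
  relDim (D.map (g : V →ₗ[k] V)) D

namespace DegAux

/-- The quotient `A/(A ∩ p)` is isomorphic to the image of `A` in `V/p`. -/
noncomputable def quotEquivImage (p A : Submodule k V) :
    (↥A ⧸ p.comap A.subtype) ≃ₗ[k] ↥(A.map p.mkQ) := by
  have h1 : LinearMap.ker (p.mkQ ∘ₗ A.subtype) = p.comap A.subtype := by
    rw [LinearMap.ker_comp, Submodule.ker_mkQ]
  have h2 : LinearMap.range (p.mkQ ∘ₗ A.subtype) = A.map p.mkQ := by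
    rw [LinearMap.range_comp, Submodule.range_subtype]
  exact (Submodule.quotEquivOfEq _ _ h1.symm).trans
    ((p.mkQ ∘ₗ A.subtype).quotKerEquivRange.trans (LinearEquiv.ofEq _ _ h2))

lemma fd_iff (p A : Submodule k V) :
    FiniteDimensional k (↥A ⧸ p.comap A.subtype) ↔ FiniteDimensional k (A.map p.mkQ) :=
  ⟨fun _ => Module.Finite.equiv (quotEquivImage p A),
   fun _ => Module.Finite.equiv (quotEquivImage p A).symm⟩

lemma fd_image_congr (A r s : Submodule k V) (h : r.comap A.subtype = s.comap A.subtype) :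
    FiniteDimensional k (A.map r.mkQ) ↔ FiniteDimensional k (A.map s.mkQ) := by
  rw [← fd_iff, h, fd_iff]

/-- The canonical map `V/p → V/q` for `p ≤ q`. -/
noncomputable def piMap (p q : Submodule k V) (hpq : p ≤ q) : (V ⧸ p) →ₗ[k] V ⧸ q :=
  p.mapQ q LinearMap.id (fun _ hx => hpq hx)

lemma piMap_comp_mkQ (p q : Submodule k V) (hpq : p ≤ q) :
    (piMap p q hpq) ∘ₗ p.mkQ = q.mkQ := by
  ext x
  simp [piMap, Submodule.mapQ_apply]

lemma map_piMap (p q : Submodule k V) (hpq : p ≤ q) (X : Submodule k V) :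
    (X.map p.mkQ).map (piMap p q hpq) = X.map q.mkQ := by
  rw [← Submodule.map_comp, piMap_comp_mkQ]

lemma ker_piMap (p q : Submodule k V) (hpq : p ≤ q) :
    LinearMap.ker (piMap p q hpq) = q.map p.mkQ := by
  have h : (LinearMap.ker (piMap p q hpq)).comap p.mkQ = q := by
    rw [← LinearMap.ker_comp, piMap_comp_mkQ, Submodule.ker_mkQ]
  have h2 := congrArg (Submodule.map p.mkQ) h
  rw [Submodule.map_comap_eq_of_surjective p.mkQ_surjective] at h2
  exact h2

lemma fd_tower (p q X : Submodule k V) (hpq : p ≤ q)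
    (h1 : FiniteDimensional k (q.map p.mkQ)) (h2 : FiniteDimensional k (X.map q.mkQ)) :
    FiniteDimensional k (X.map p.mkQ) := by
  rw [← Submodule.fg_iff_finiteDimensional]
  apply Submodule.fg_of_fg_map_of_fg_inf_ker (piMap p q hpq)
  · rw [map_piMap, Submodule.fg_iff_finiteDimensional]
    exact h2
  · rw [Submodule.fg_iff_finiteDimensional]
    have hle : (X.map p.mkQ) ⊓ LinearMap.ker (piMap p q hpq) ≤ q.map p.mkQ := by
      rw [ker_piMap]; exact inf_le_right
    exact Submodule.finiteDimensional_of_le hle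

lemma finrank_split (p q X : Submodule k V) (hpq : p ≤ q) (hqX : q ≤ X)
    [FiniteDimensional k (X.map p.mkQ)] :
    finrank k (X.map q.mkQ) + finrank k (q.map p.mkQ) = finrank k (X.map p.mkQ) := by
  have h := LinearMap.finrank_range_add_finrank_ker ((piMap p q hpq).domRestrict (X.map p.mkQ))
  rw [LinearMap.range_domRestrict, map_piMap, LinearMap.ker_domRestrict, ker_piMap] at h
  have hle : q.map p.mkQ ≤ X.map p.mkQ := Submodule.map_mono hqX
  rwa [LinearEquiv.finrank_eq (Submodule.comapSubtypeEquivOfLe hle)] at h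

lemma map_mkQ_inf (p A B : Submodule k V) (_h1 : p ≤ A) (h2 : p ≤ B) :
    (A ⊓ B).map p.mkQ = A.map p.mkQ ⊓ B.map p.mkQ := by
  apply le_antisymm
  · exact le_inf (Submodule.map_mono inf_le_left) (Submodule.map_mono inf_le_right)
  · intro x hx
    simp only [Submodule.mem_inf, Submodule.mem_map] at hx
    obtain ⟨⟨a, ha, rfl⟩, b, hb, hab⟩ := hx
    refine Submodule.mem_map_of_mem ?_
    have hd : b - a ∈ p := by
      rw [Submodule.mkQ_apply, Submodule.mkQ_apply, Submodule.Quotient.eq] at hab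
      exact hab
    have haB : a ∈ B := by
      have := B.sub_mem hb (h2 hd)
      simpa using this
    exact ⟨ha, haB⟩

lemma comm_iff (A B : Submodule k V) :
    AreCommensurable A B ↔
      FiniteDimensional k (A.map (A ⊓ B).mkQ) ∧ FiniteDimensional k (B.map (A ⊓ B).mkQ) := by
  unfold AreCommensurable
  rw [fd_iff, Submodule.map_sup]
  constructor
  · intro h
    haveI := h
    exact ⟨Submodule.finiteDimensional_of_le
        (le_sup_left : _ ≤ A.map (A ⊓ B).mkQ ⊔ B.map (A ⊓ B).mkQ),
      Submodule.finiteDimensional_of_le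
        (le_sup_right : _ ≤ A.map (A ⊓ B).mkQ ⊔ B.map (A ⊓ B).mkQ)⟩
  · rintro ⟨h1, h2⟩
    haveI := h1; haveI := h2
    exact Submodule.finiteDimensional_sup _ _

lemma relDim_eq (A B : Submodule k V) :
    relDim A B = (finrank k (B.map (A ⊓ B).mkQ) : ℤ) - finrank k (A.map (A ⊓ B).mkQ) := by
  unfold relDim
  rw [LinearEquiv.finrank_eq (quotEquivImage (A ⊓ B) B),
    LinearEquiv.finrank_eq (quotEquivImage (A ⊓ B) A)]

lemma relDim_rebase (p A B : Submodule k V) (hpA : p ≤ A) (hpB : p ≤ B)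
    (hA : FiniteDimensional k (A.map p.mkQ)) (hB : FiniteDimensional k (B.map p.mkQ)) :
    relDim A B = (finrank k (B.map p.mkQ) : ℤ) - finrank k (A.map p.mkQ) := by
  have hpq : p ≤ A ⊓ B := le_inf hpA hpB
  have e1 := finrank_split p (A ⊓ B) A hpq inf_le_left
  have e2 := finrank_split p (A ⊓ B) B hpq inf_le_right
  rw [relDim_eq]
  have := e1
  omega

lemma fd_triple (A B C : Submodule k V) (hAB : AreCommensurable A B)
    (hBC : AreCommensurable B C) :
    FiniteDimensional k (A.map (A ⊓ B ⊓ C).mkQ) ∧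
    FiniteDimensional k (B.map (A ⊓ B ⊓ C).mkQ) ∧
    FiniteDimensional k (C.map (A ⊓ B ⊓ C).mkQ) := by
  set p := A ⊓ B ⊓ C with hp
  obtain ⟨hA', hB'⟩ := (comm_iff A B).mp hAB
  obtain ⟨hB'', hC''⟩ := (comm_iff B C).mp hBC
  have hpq : p ≤ A ⊓ B := inf_le_left
  have hpA : p ≤ A := hpq.trans inf_le_left
  have hpB : p ≤ B := hpq.trans inf_le_right
  have hpC : p ≤ C := inf_le_right
  have hpr : p ≤ B ⊓ C := le_inf hpB hpC
  have h1 : FiniteDimensional k ((A ⊓ B).map (B ⊓ C).mkQ) :=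
    Submodule.finiteDimensional_of_le (Submodule.map_mono (inf_le_right : A ⊓ B ≤ B))
  have hc1 : (B ⊓ C).comap (A ⊓ B).subtype = p.comap (A ⊓ B).subtype := by
    ext x
    have hx := x.2
    simp only [Submodule.mem_inf] at hx
    simp only [Submodule.mem_comap, Submodule.coe_subtype, hp, Submodule.mem_inf]
    tauto
  have h2 : FiniteDimensional k ((A ⊓ B).map p.mkQ) :=
    (fd_image_congr _ _ _ hc1).mp h1
  have ha : FiniteDimensional k (A.map p.mkQ) := fd_tower p (A ⊓ B) A hpq h2 hA'
  have hb : FiniteDimensional k (B.map p.mkQ) := fd_tower p (A ⊓ B) B hpq h2 hB'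
  have h3 : FiniteDimensional k ((B ⊓ C).map (A ⊓ B).mkQ) :=
    Submodule.finiteDimensional_of_le (Submodule.map_mono (inf_le_left : B ⊓ C ≤ B))
  have hc2 : (A ⊓ B).comap (B ⊓ C).subtype = p.comap (B ⊓ C).subtype := by
    ext x
    have hx := x.2
    simp only [Submodule.mem_inf] at hx
    simp only [Submodule.mem_comap, Submodule.coe_subtype, hp, Submodule.mem_inf]
    tauto
  have h4 : FiniteDimensional k ((B ⊓ C).map p.mkQ) :=
    (fd_image_congr _ _ _ hc2).mp h3
  have hc : FiniteDimensional k (C.map p.mkQ) := fd_tower p (B ⊓ C) C hpr h4 hC''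
  exact ⟨ha, hb, hc⟩

lemma comm_refl (A : Submodule k V) : AreCommensurable A A := by
  rw [comm_iff]
  have hbot : A.map (A ⊓ A).mkQ = ⊥ := by
    rw [Submodule.eq_bot_iff]
    rintro x hx
    simp only [Submodule.mem_map] at hx
    obtain ⟨a, ha, rfl⟩ := hx
    simp only [Submodule.mkQ_apply, Submodule.Quotient.mk_eq_zero]
    exact (le_inf le_rfl le_rfl : A ≤ A ⊓ A) ha
  constructor <;> · rw [hbot]; infer_instance

lemma comm_symm {A B : Submodule k V} (h : AreCommensurable A B) : AreCommensurable B A := by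
  rw [comm_iff] at h ⊢
  rw [inf_comm B A]
  exact ⟨h.2, h.1⟩

lemma comm_trans {A B C : Submodule k V} (hAB : AreCommensurable A B)
    (hBC : AreCommensurable B C) : AreCommensurable A C := by
  obtain ⟨ha, _, hc⟩ := fd_triple A B C hAB hBC
  have hpA : (A ⊓ B ⊓ C : Submodule k V) ≤ A := inf_le_left.trans inf_le_left
  have hpC : (A ⊓ B ⊓ C : Submodule k V) ≤ C := inf_le_right
  have hp : (A ⊓ B ⊓ C : Submodule k V) ≤ A ⊓ C := le_inf hpA hpC
  rw [comm_iff]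
  constructor
  · rw [← map_piMap (A ⊓ B ⊓ C) (A ⊓ C) hp A]
    infer_instance
  · rw [← map_piMap (A ⊓ B ⊓ C) (A ⊓ C) hp C]
    infer_instance

lemma relDim_add (A B C : Submodule k V) (hAB : AreCommensurable A B)
    (hBC : AreCommensurable B C) : relDim A C = relDim A B + relDim B C := by
  obtain ⟨ha, hb, hc⟩ := fd_triple A B C hAB hBC
  have hpq : (A ⊓ B ⊓ C : Submodule k V) ≤ A ⊓ B := inf_le_left
  have hpA : (A ⊓ B ⊓ C : Submodule k V) ≤ A := hpq.trans inf_le_left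
  have hpB : (A ⊓ B ⊓ C : Submodule k V) ≤ B := hpq.trans inf_le_right
  have hpC : (A ⊓ B ⊓ C : Submodule k V) ≤ C := inf_le_right
  rw [relDim_rebase (A ⊓ B ⊓ C) A B hpA hpB ha hb,
    relDim_rebase (A ⊓ B ⊓ C) B C hpB hpC hb hc,
    relDim_rebase (A ⊓ B ⊓ C) A C hpA hpC ha hc]
  ring

section Equiv

variable (e : V ≃ₗ[k] V)

/-- The induced equivalence `V/p ≃ V/e(p)`. -/
noncomputable def quotMapEquiv (p : Submodule k V) :
    (V ⧸ p) ≃ₗ[k] V ⧸ p.map (e : V →ₗ[k] V) :=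
  Submodule.Quotient.equiv p (p.map (e : V →ₗ[k] V)) e rfl

lemma quotMapEquiv_comp_mkQ (p : Submodule k V) :
    ((quotMapEquiv e p : (V ⧸ p) →ₗ[k] V ⧸ p.map (e : V →ₗ[k] V)) ∘ₗ p.mkQ)
      = (p.map (e : V →ₗ[k] V)).mkQ ∘ₗ (e : V →ₗ[k] V) := by
  ext x
  simp [quotMapEquiv, Submodule.Quotient.equiv, Submodule.mapQ_apply]

lemma image_map_eq (p X : Submodule k V) :
    (X.map (e : V →ₗ[k] V)).map (p.map (e : V →ₗ[k] V)).mkQ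
      = (X.map p.mkQ).map (quotMapEquiv e p : (V ⧸ p) →ₗ[k] V ⧸ p.map (e : V →ₗ[k] V)) := by
  rw [← Submodule.map_comp, ← quotMapEquiv_comp_mkQ, Submodule.map_comp]

lemma finrank_image_map (p X : Submodule k V) :
    finrank k ((X.map (e : V →ₗ[k] V)).map (p.map (e : V →ₗ[k] V)).mkQ)
      = finrank k (X.map p.mkQ) := by
  rw [image_map_eq]
  exact (LinearEquiv.finrank_eq ((quotMapEquiv e p).submoduleMap (X.map p.mkQ))).symm

lemma fd_image_map (p X : Submodule k V) (h : FiniteDimensional k (X.map p.mkQ)) :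
    FiniteDimensional k ((X.map (e : V →ₗ[k] V)).map (p.map (e : V →ₗ[k] V)).mkQ) := by
  rw [image_map_eq]
  exact Module.Finite.equiv ((quotMapEquiv e p).submoduleMap (X.map p.mkQ))

lemma map_inf_eq (A B : Submodule k V) :
    (A.map (e : V →ₗ[k] V)) ⊓ (B.map (e : V →ₗ[k] V)) = (A ⊓ B).map (e : V →ₗ[k] V) :=
  (Submodule.map_inf _ e.injective).symm

lemma comm_map {A B : Submodule k V} (h : AreCommensurable A B) :
    AreCommensurable (A.map (e : V →ₗ[k] V)) (B.map (e : V →ₗ[k] V)) := by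
  rw [comm_iff] at h ⊢
  rw [map_inf_eq]
  exact ⟨fd_image_map e _ _ h.1, fd_image_map e _ _ h.2⟩

lemma relDim_map (A B : Submodule k V) :
    relDim (A.map (e : V →ₗ[k] V)) (B.map (e : V →ₗ[k] V)) = relDim A B := by
  rw [relDim_eq, relDim_eq, map_inf_eq, finrank_image_map, finrank_image_map]

end Equiv

end DegAux

open DegAux in
/-- The automorphisms `g` of `V` with `g(D)` commensurable with `D` form a subgroup of
`V ≃ₗ[k] V`, and `deg(g) = [g(D) | D]` is a group homomorphism from it to `ℤ`. -/
theorem deg_is_hom_on_subgroup (D : Submodule k V) :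
    ∃ Γ : Subgroup (V ≃ₗ[k] V),
      (∀ g : V ≃ₗ[k] V, g ∈ Γ ↔ AreCommensurable (D.map (g : V →ₗ[k] V)) D) ∧
      ∀ g₁ g₂ : V ≃ₗ[k] V, g₁ ∈ Γ → g₂ ∈ Γ →
        degRR D (g₁ * g₂) = degRR D g₁ + degRR D g₂ := by
  have hmul : ∀ a b : V ≃ₗ[k] V,
      D.map ((a * b : V ≃ₗ[k] V) : V →ₗ[k] V)
        = (D.map (b : V →ₗ[k] V)).map (a : V →ₗ[k] V) := by
    intro a b
    rw [← Submodule.map_comp]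
    rfl
  have hone : AreCommensurable (D.map ((1 : V ≃ₗ[k] V) : V →ₗ[k] V)) D := by
    have h : ((1 : V ≃ₗ[k] V) : V →ₗ[k] V) = LinearMap.id := rfl
    rw [h, Submodule.map_id]
    exact comm_refl D
  have hmulmem : ∀ a b : V ≃ₗ[k] V, AreCommensurable (D.map (a : V →ₗ[k] V)) D →
      AreCommensurable (D.map (b : V →ₗ[k] V)) D →
      AreCommensurable (D.map ((a * b : V ≃ₗ[k] V) : V →ₗ[k] V)) D := by
    intro a b ha hb
    rw [hmul a b]
    exact comm_trans (comm_map a hb) ha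
  have hinvmem : ∀ a : V ≃ₗ[k] V, AreCommensurable (D.map (a : V →ₗ[k] V)) D →
      AreCommensurable (D.map ((a⁻¹ : V ≃ₗ[k] V) : V →ₗ[k] V)) D := by
    intro a ha
    have h1 := comm_map (a⁻¹ : V ≃ₗ[k] V) ha
    have h2 : (D.map (a : V →ₗ[k] V)).map ((a⁻¹ : V ≃ₗ[k] V) : V →ₗ[k] V) = D := by
      rw [← Submodule.map_comp]
      have h3 : ((a⁻¹ : V ≃ₗ[k] V) : V →ₗ[k] V) ∘ₗ (a : V →ₗ[k] V) = LinearMap.id := by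
        ext x
        simp only [LinearMap.coe_comp, LinearEquiv.coe_coe, Function.comp_apply,
          LinearMap.id_coe, id_eq]
        exact a.symm_apply_apply x
      rw [h3, Submodule.map_id]
    rw [h2] at h1
    exact comm_symm h1
  refine ⟨{ carrier := {g : V ≃ₗ[k] V | AreCommensurable (D.map (g : V →ₗ[k] V)) D}
            one_mem' := hone
            mul_mem' := fun {a b} ha hb => hmulmem a b ha hb
            inv_mem' := fun {a} ha => hinvmem a ha }, fun g => Iff.rfl, ?_⟩
  intro g₁ g₂ h₁ h₂
  have h₁' : AreCommensurable (D.map (g₁ : V →ₗ[k] V)) D := h₁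
  have h₂' : AreCommensurable (D.map (g₂ : V →ₗ[k] V)) D := h₂
  unfold degRR
  rw [hmul g₁ g₂]
  have hc1 : AreCommensurable ((D.map (g₂ : V →ₗ[k] V)).map (g₁ : V →ₗ[k] V))
      (D.map (g₁ : V →ₗ[k] V)) := comm_map g₁ h₂'
  rw [relDim_add _ _ _ hc1 h₁', relDim_map g₁]
  ring
end

section
/- Dimension theories form a ℤ-torsor: Let k be a field, V a vector space over k, and A₀ a fixed k-subspace of V. Then (i) there exists a dimension theory on the commensurability class of A₀, and (ii) for any two dimension theories d₁, d₂ on this class there exists a unique integer m such that d₂(B) = d₁(B) + m for every k-subspace B commensurable with A₀; in other words, ℤ acts freely and transitively on the set of dimension theories by (m + d)(B) = d(B) + m. -/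
open Module

variable {k V : Type*} [Field k] [AddCommGroup V] [Module k V]

/-- A dimension theory on the commensurability class of `A₀`: an integer-valued
function on the subspaces commensurable with `A₀` satisfying
`d(B₂) = d(B₁) + [B₁ | B₂]`. -/
def IsDimTheory (A₀ : Submodule k V)
    (d : ∀ B : Submodule k V, AreCommensurable A₀ B → ℤ) : Prop :=
  ∀ (B₁ B₂ : Submodule k V) (h₁ : AreCommensurable A₀ B₁)
    (h₂ : AreCommensurable A₀ B₂), d B₂ h₂ = d B₁ h₁ + relDim B₁ B₂

noncomputable def qmap (C : Submodule k V) {D A : Submodule k V} (hDA : D ≤ A) :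
    ↥D →ₗ[k] ↥A ⧸ C.comap A.subtype :=
  (C.comap A.subtype).mkQ.comp (Submodule.inclusion hDA)

lemma ker_qmap (C : Submodule k V) {D A : Submodule k V} (hDA : D ≤ A) :
    LinearMap.ker (qmap C hDA) = (C ⊓ D).comap D.subtype := by
  ext x
  simp [qmap, Submodule.Quotient.mk_eq_zero, Submodule.inclusion, x.2]

lemma range_qmap (C : Submodule k V) {D A : Submodule k V} (hDA : D ≤ A) :
    LinearMap.range (qmap C hDA) = (D.comap A.subtype).map (C.comap A.subtype).mkQ := by
  ext y
  simp only [qmap, LinearMap.mem_range, LinearMap.comp_apply, Submodule.mem_map,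
    Submodule.mem_comap]
  constructor
  · rintro ⟨x, rfl⟩
    exact ⟨Submodule.inclusion hDA x, x.2, rfl⟩
  · rintro ⟨z, hz, rfl⟩
    exact ⟨⟨(z : V), hz⟩, by rfl⟩

lemma fin_of_le (C : Submodule k V) {D A : Submodule k V} (hDA : D ≤ A)
    [FiniteDimensional k (↥A ⧸ C.comap A.subtype)] :
    FiniteDimensional k (↥D ⧸ (C ⊓ D).comap D.subtype) := by
  have e := LinearMap.quotKerEquivRange (qmap C hDA)
  rw [ker_qmap] at e
  exact Module.Finite.equiv e.symm

lemma finrank_tower {C D A : Submodule k V} (hCD : C ≤ D) (hDA : D ≤ A)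
    [FiniteDimensional k (↥A ⧸ C.comap A.subtype)] :
    finrank k (↥A ⧸ C.comap A.subtype)
      = finrank k (↥D ⧸ C.comap D.subtype) + finrank k (↥A ⧸ D.comap A.subtype) := by
  have hC'D' : C.comap A.subtype ≤ D.comap A.subtype := Submodule.comap_mono hCD
  have h1 := Submodule.finrank_quotient_add_finrank
    ((D.comap A.subtype).map (C.comap A.subtype).mkQ)
  have e1 := Submodule.quotientQuotientEquivQuotient (C.comap A.subtype) (D.comap A.subtype) hC'D'
  have e2 := LinearMap.quotKerEquivRange (qmap C hDA)
  rw [ker_qmap, range_qmap, inf_eq_left.mpr hCD] at e2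
  have g1 := e1.finrank_eq
  have g2 := e2.finrank_eq
  omega

lemma fin_of_tower {C D A : Submodule k V} (hCD : C ≤ D) (hDA : D ≤ A)
    [FiniteDimensional k (↥D ⧸ C.comap D.subtype)]
    [FiniteDimensional k (↥A ⧸ D.comap A.subtype)] :
    FiniteDimensional k (↥A ⧸ C.comap A.subtype) := by
  have e2 := LinearMap.quotKerEquivRange (qmap C hDA)
  rw [ker_qmap, inf_eq_left.mpr hCD] at e2
  haveI : Module.Finite k ((D.comap A.subtype).map (C.comap A.subtype).mkQ) := by
    rw [← range_qmap C hDA]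
    exact Module.Finite.equiv e2
  have e1 := Submodule.quotientQuotientEquivQuotient (C.comap A.subtype) (D.comap A.subtype)
    (Submodule.comap_mono hCD)
  haveI : Module.Finite k
      ((↥A ⧸ C.comap A.subtype) ⧸ (D.comap A.subtype).map (C.comap A.subtype).mkQ) :=
    Module.Finite.equiv e1.symm
  have hr := Submodule.rank_quotient_add_rank ((D.comap A.subtype).map (C.comap A.subtype).mkQ)
  exact Module.rank_lt_aleph0_iff.mp (by
    rw [← hr]
    exact Cardinal.add_lt_aleph0 (Module.rank_lt_aleph0_iff.mpr ‹_›)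
      (Module.rank_lt_aleph0_iff.mpr ‹_›))

lemma fin_left_of_comm {A B : Submodule k V} (h : AreCommensurable A B) :
    FiniteDimensional k (↥A ⧸ (A ⊓ B).comap A.subtype) := by
  haveI : FiniteDimensional k (↥(A ⊔ B) ⧸ (A ⊓ B).comap (A ⊔ B).subtype) := h
  have := fin_of_le (A ⊓ B) (le_sup_left : A ≤ A ⊔ B)
  rwa [inf_eq_left.mpr inf_le_left] at this

lemma fin_right_of_comm {A B : Submodule k V} (h : AreCommensurable A B) :
    FiniteDimensional k (↥B ⧸ (A ⊓ B).comap B.subtype) := by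
  haveI : FiniteDimensional k (↥(A ⊔ B) ⧸ (A ⊓ B).comap (A ⊔ B).subtype) := h
  have := fin_of_le (A ⊓ B) (le_sup_right : B ≤ A ⊔ B)
  rwa [inf_eq_left.mpr inf_le_right] at this

lemma relDim_eq_of_le {A B D : Submodule k V} (hA : D ≤ A) (hB : D ≤ B)
    [FiniteDimensional k (↥A ⧸ D.comap A.subtype)]
    [FiniteDimensional k (↥B ⧸ D.comap B.subtype)] :
    relDim A B = (finrank k (↥B ⧸ D.comap B.subtype) : ℤ)
      - (finrank k (↥A ⧸ D.comap A.subtype) : ℤ) := by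
  have hD : D ≤ A ⊓ B := le_inf hA hB
  have t1 := finrank_tower hD (inf_le_left : A ⊓ B ≤ A)
  have t2 := finrank_tower hD (inf_le_right : A ⊓ B ≤ B)
  rw [relDim]
  omega

lemma relDim_trans {A B C : Submodule k V} (hAB : AreCommensurable A B)
    (hAC : AreCommensurable A C) : relDim A C = relDim A B + relDim B C := by
  set D := A ⊓ B ⊓ C with hD
  haveI iAB := fin_left_of_comm hAB
  haveI iBA := fin_right_of_comm hAB
  haveI iAC := fin_left_of_comm hAC
  haveI iCA := fin_right_of_comm hAC
  have h1 : (A ⊓ C) ⊓ (A ⊓ B) = D := by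
    rw [hD]; ext x; simp only [Submodule.mem_inf]; tauto
  have h2 : (A ⊓ B) ⊓ (A ⊓ C) = D := by
    rw [hD]; ext x; simp only [Submodule.mem_inf]; tauto
  haveI iABD : FiniteDimensional k (↥(A ⊓ B) ⧸ D.comap (A ⊓ B).subtype) := by
    have := fin_of_le (A ⊓ C) (inf_le_left : A ⊓ B ≤ A)
    rwa [h1] at this
  haveI iACD : FiniteDimensional k (↥(A ⊓ C) ⧸ D.comap (A ⊓ C).subtype) := by
    have := fin_of_le (A ⊓ B) (inf_le_left : A ⊓ C ≤ A)
    rwa [h2] at this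
  have hDAB : D ≤ A ⊓ B := inf_le_left
  have hDAC : D ≤ A ⊓ C := by rw [hD]; exact le_inf (inf_le_left.trans inf_le_left) inf_le_right
  haveI iA : FiniteDimensional k (↥A ⧸ D.comap A.subtype) :=
    fin_of_tower hDAB (inf_le_left : A ⊓ B ≤ A)
  haveI iB : FiniteDimensional k (↥B ⧸ D.comap B.subtype) :=
    fin_of_tower hDAB (inf_le_right : A ⊓ B ≤ B)
  haveI iC : FiniteDimensional k (↥C ⧸ D.comap C.subtype) :=
    fin_of_tower hDAC (inf_le_right : A ⊓ C ≤ C)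
  have hDA : D ≤ A := hDAB.trans inf_le_left
  have hDB : D ≤ B := hDAB.trans inf_le_right
  have hDC : D ≤ C := hDAC.trans inf_le_right
  rw [relDim_eq_of_le hDA hDC, relDim_eq_of_le hDA hDB, relDim_eq_of_le hDB hDC]
  ring

lemma areCommensurable_self (A : Submodule k V) : AreCommensurable A A := by
  have h : (A ⊓ A).comap (A ⊔ A).subtype = ⊤ := by
    ext x
    simp only [Submodule.mem_comap, Submodule.mem_inf, Submodule.mem_top, iff_true]
    have hx : (x : V) ∈ A := (sup_le le_rfl le_rfl : A ⊔ A ≤ A) x.2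
    exact ⟨hx, hx⟩
  haveI : Subsingleton (↥(A ⊔ A) ⧸ (A ⊓ A).comap (A ⊔ A).subtype) :=
    Submodule.Quotient.subsingleton_iff.mpr h
  exact FiniteDimensional.of_rank_eq_zero (rank_subsingleton' _ _)

/-- Dimension theories on the commensurability class of `A₀` exist and form a
`ℤ`-torsor: `ℤ` acts freely and transitively on them by `(m + d)(B) = d(B) + m`. -/
theorem dimTheory_torsor (A₀ : Submodule k V) :
    (∃ d : ∀ B : Submodule k V, AreCommensurable A₀ B → ℤ, IsDimTheory A₀ d) ∧
    (∀ d₁ d₂ : ∀ B : Submodule k V, AreCommensurable A₀ B → ℤ,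
      IsDimTheory A₀ d₁ → IsDimTheory A₀ d₂ →
      ∃! m : ℤ, ∀ (B : Submodule k V) (h : AreCommensurable A₀ B),
        d₂ B h = d₁ B h + m) := by
  constructor
  · exact ⟨fun B _ => relDim A₀ B, fun B₁ B₂ h₁ h₂ => relDim_trans h₁ h₂⟩
  · intro d₁ d₂ hd₁ hd₂
    have h₀ := areCommensurable_self A₀
    refine ⟨d₂ A₀ h₀ - d₁ A₀ h₀, ?_, ?_⟩
    · intro B h
      rw [hd₂ A₀ B h₀ h, hd₁ A₀ B h₀ h]
      ring
    · intro m hm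
      have := hm A₀ h₀
      omega
end
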